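/- For every κ > 1, every integer n ≥ 1, and every L ≥ 1, there exists a positive integer ζ, depending only on κ, n and L, with the following property: for every order-connected J ⊆ ℤ and every r : J → (0,∞) satisfying the L-Lipschitz growth condition and the (κ,n,0)-flaring property: (i) if j₀, j₀+n ∈ J and r_{j₀+n} ≥ r_{j₀}, then every index i ∈ J at which r attains its minimum satisfies i < j₀ + ζ; (ii) if j₀, j₀−n ∈ J and r_{j₀−n} ≥ r_{j₀}, then every index i ∈ J at which r attains its minimum satisfies i > j₀ − ζ. -/
import Mathlib

private lemma lip_chain (L : ℝ) (hL : 1 ≤ L) (J : Set ℤ) (hJ : J.OrdConnected)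
    (r : ℤ → ℝ)
    (hlip : ∀ j ∈ J, ∀ k ∈ J, |j - k| = 1 → r j ≤ L * r k) :
    ∀ d : ℕ, ∀ a : ℤ, a ∈ J → a + d ∈ J → r a ≤ L ^ d * r (a + d) := by
  intro d
  induction d with
  | zero => intro a ha hb; simp
  | succ d ih =>
    intro a ha hb
    have hmid : a + d ∈ J := hJ.out ha hb ⟨by omega, by push_cast; omega⟩
    have h1 : r a ≤ L ^ d * r (a + d) := ih a ha hmid
    have h2 : r (a + d) ≤ L * r (a + (d + 1 : ℕ)) := by
      apply hlip _ hmid _ hb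
      push_cast
      rw [show (a + (d : ℤ)) - (a + ((d : ℤ) + 1)) = -1 by ring]
      norm_num
    have hLd : (0 : ℝ) ≤ L ^ d := pow_nonneg (by linarith) d
    calc r a ≤ L ^ d * r (a + d) := h1
      _ ≤ L ^ d * (L * r (a + (d + 1 : ℕ))) := by
          exact mul_le_mul_of_nonneg_left h2 hLd
      _ = L ^ (d + 1) * r (a + (d + 1 : ℕ)) := by ring

private lemma grow (κ : ℝ) (hκ : 1 < κ) (n : ℤ) (hn : 1 ≤ n) (J : Set ℤ)
    (hJ : J.OrdConnected) (r : ℤ → ℝ) (hpos : ∀ j ∈ J, 0 < r j)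
    (hflare : ∀ j : ℤ, j - n ∈ J → j ∈ J → j + n ∈ J → 0 < r j →
      κ * r j ≤ max (r (j - n)) (r (j + n)))
    (j₀ : ℤ) (h0 : j₀ ∈ J) (hmono : r j₀ ≤ r (j₀ + n)) :
    ∀ k : ℕ, j₀ + ((k : ℤ) + 1) * n ∈ J →
      r (j₀ + (k : ℤ) * n) ≤ r (j₀ + ((k : ℤ) + 1) * n) ∧
      κ ^ k * r (j₀ + n) ≤ r (j₀ + ((k : ℤ) + 1) * n) := by
  intro k
  induction k with
  | zero =>
    intro _
    constructor
    · simpa using hmono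
    · simp
  | succ k ih =>
    intro hmem
    push_cast at hmem ⊢
    have hk0 : (0 : ℤ) ≤ (k : ℤ) := Int.natCast_nonneg k
    -- memberships between j₀ and j₀ + (k+2)*n
    have hmemk1 : j₀ + ((k : ℤ) + 1) * n ∈ J :=
      hJ.out h0 hmem ⟨by nlinarith, by nlinarith⟩
    have hmemk : j₀ + (k : ℤ) * n ∈ J :=
      hJ.out h0 hmem ⟨by nlinarith, by nlinarith⟩
    obtain ⟨hA, hB⟩ := ih hmemk1
    set j := j₀ + ((k : ℤ) + 1) * n with hj
    have hjn1 : j - n = j₀ + (k : ℤ) * n := by rw [hj]; ring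
    have hjn2 : j + n = j₀ + ((k : ℤ) + 1 + 1) * n := by rw [hj]; ring
    have hrjpos : 0 < r j := hpos _ hmemk1
    have hmax : κ * r j ≤ max (r (j - n)) (r (j + n)) := by
      apply hflare j (by rw [hjn1]; exact hmemk) hmemk1 (by rw [hjn2]; exact hmem) hrjpos
    have hstep : κ * r j ≤ r (j + n) := by
      by_contra hcon
      push_neg at hcon
      have h1 : r (j - n) < κ * r j := by
        rw [hjn1]
        calc r (j₀ + (k : ℤ) * n) ≤ r j := hA
          _ < κ * r j := by nlinarith
      have := max_lt h1 hcon
      linarith [hmax, this]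
    rw [hjn2] at hstep
    constructor
    · calc r (j₀ + ((k : ℤ) + 1) * n) = r j := by rw [hj]
        _ ≤ κ * r j := by nlinarith
        _ ≤ r (j₀ + ((k : ℤ) + 1 + 1) * n) := hstep
    · have hκ0 : (0 : ℝ) ≤ κ := by linarith
      calc κ ^ (k + 1) * r (j₀ + n) = κ * (κ ^ k * r (j₀ + n)) := by ring
        _ ≤ κ * r j := by
            apply mul_le_mul_of_nonneg_left _ hκ0
            exact hB
        _ ≤ r (j₀ + ((k : ℤ) + 1 + 1) * n) := hstep

private lemma left_bound (κ : ℝ) (hκ : 1 < κ) (L : ℝ) (hL : 1 ≤ L)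
    (n : ℤ) (hn : 1 ≤ n) (k₀ : ℕ) (hk : L ^ n.toNat < κ ^ k₀)
    (J : Set ℤ) (hJ : J.OrdConnected) (r : ℤ → ℝ)
    (hpos : ∀ j ∈ J, 0 < r j)
    (hlip : ∀ j ∈ J, ∀ k ∈ J, |j - k| = 1 → r j ≤ L * r k)
    (hflare : ∀ j : ℤ, j - n ∈ J → j ∈ J → j + n ∈ J → 0 < r j →
      κ * r j ≤ max (r (j - n)) (r (j + n)))
    (j₀ : ℤ) (h0 : j₀ ∈ J) (hmono : r j₀ ≤ r (j₀ + n))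
    (i : ℤ) (hi : i ∈ J) (hmin : ∀ j ∈ J, r i ≤ r j) :
    i < j₀ + ((k₀ : ℤ) + 2) * n := by
  by_contra hcon
  push_neg at hcon
  set q : ℤ := (i - j₀) / n with hq
  set d : ℤ := (i - j₀) % n with hd
  have hn0 : (0 : ℤ) < n := by omega
  have hd0 : 0 ≤ d := Int.emod_nonneg _ (by omega)
  have hdn : d < n := Int.emod_lt_of_pos _ hn0
  have heq : i - j₀ = n * q + d := (Int.mul_ediv_add_emod (i - j₀) n).symm
  have hqk : (k₀ : ℤ) + 2 ≤ q := by
    by_contra hq2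
    push_neg at hq2
    have hq3 : q ≤ (k₀ : ℤ) + 1 := by omega
    have hk00 : (0 : ℤ) ≤ (k₀ : ℤ) := Int.natCast_nonneg k₀
    nlinarith
  set K : ℕ := (q - 1).toNat with hK
  have hKZ : (K : ℤ) = q - 1 := Int.toNat_of_nonneg (by omega)
  have hKk₀ : k₀ ≤ K := by omega
  have hiq : i = j₀ + q * n + d := by linear_combination heq
  have hqn0 : 0 ≤ q * n := by nlinarith
  have hmemq : j₀ + q * n ∈ J := hJ.out h0 hi ⟨by linarith, by linarith⟩
  have hgrow := grow κ hκ n hn J hJ r hpos hflare j₀ h0 hmono K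
    (by rw [show ((K : ℤ) + 1) * n = q * n by rw [hKZ]; ring]; exact hmemq)
  rw [show ((K : ℤ) + 1) * n = q * n by rw [hKZ]; ring] at hgrow
  obtain ⟨-, hB⟩ := hgrow
  -- Lipschitz from j₀ + q*n to i
  have hchain := lip_chain L hL J hJ r hlip d.toNat (j₀ + q * n) hmemq
    (by rw [show j₀ + q * n + (d.toNat : ℤ) = i by rw [Int.toNat_of_nonneg hd0]; omega]; exact hi)
  rw [show j₀ + q * n + (d.toNat : ℤ) = i by rw [Int.toNat_of_nonneg hd0]; omega] at hchain
  have hdle : d.toNat ≤ n.toNat := by omega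
  have hrj0 : 0 < r j₀ := hpos _ h0
  have hri : 0 < r i := hpos _ hi
  have hLd : L ^ d.toNat ≤ L ^ n.toNat := pow_le_pow_right₀ hL hdle
  have hκK : κ ^ k₀ ≤ κ ^ K := pow_le_pow_right₀ (le_of_lt hκ) hKk₀
  have hc1 : κ ^ k₀ * r j₀ ≤ κ ^ K * r (j₀ + n) :=
    mul_le_mul hκK hmono hrj0.le (pow_nonneg (by linarith) K)
  have hc4 : L ^ d.toNat * r i ≤ L ^ n.toNat * r j₀ :=
    mul_le_mul hLd (hmin j₀ h0) hri.le (pow_nonneg (by linarith) n.toNat)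
  have hc5 : L ^ n.toNat * r j₀ < κ ^ k₀ * r j₀ :=
    mul_lt_mul_of_pos_right hk hrj0
  have : κ ^ k₀ * r j₀ < κ ^ k₀ * r j₀ :=
    lt_of_le_of_lt (le_trans (le_trans hc1 hB) (le_trans hchain hc4)) hc5
  exact absurd this (lt_irrefl _)

/-- For all `κ > 1`, integer `n ≥ 1` and `L ≥ 1` there exists a positive
integer `ζ`, depending only on `κ, n, L`, such that for any `r : J → (0,∞)` satisfying
the `L`-Lipschitz growth condition and the `(κ,n,0)`-flaring property on an
order-connected `J ⊆ ℤ`: if `j₀, j₀+n ∈ J` and `r (j₀+n) ≥ r j₀` then every minimizer of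
`r` on `J` lies strictly to the left of `j₀ + ζ`; and if `j₀, j₀−n ∈ J` and
`r (j₀−n) ≥ r j₀` then every minimizer lies strictly to the right of `j₀ − ζ`. -/
theorem minima_location_bound
    (κ : ℝ) (hκ : 1 < κ) (n : ℤ) (hn : 1 ≤ n) (L : ℝ) (hL : 1 ≤ L) :
    ∃ ζ : ℤ, 0 < ζ ∧
      ∀ (J : Set ℤ), J.OrdConnected →
        ∀ r : ℤ → ℝ, (∀ j ∈ J, 0 < r j) →
          (∀ j ∈ J, ∀ k ∈ J, |j - k| = 1 → r j ≤ L * r k) →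
          (∀ j : ℤ, j - n ∈ J → j ∈ J → j + n ∈ J → 0 < r j →
            κ * r j ≤ max (r (j - n)) (r (j + n))) →
          ((∀ j₀ : ℤ, j₀ ∈ J → j₀ + n ∈ J → r j₀ ≤ r (j₀ + n) →
            ∀ i ∈ J, (∀ j ∈ J, r i ≤ r j) → i < j₀ + ζ) ∧
           (∀ j₀ : ℤ, j₀ ∈ J → j₀ - n ∈ J → r j₀ ≤ r (j₀ - n) →
            ∀ i ∈ J, (∀ j ∈ J, r i ≤ r j) → j₀ - ζ < i)) := by
  obtain ⟨k₀, hk₀⟩ := pow_unbounded_of_one_lt (L ^ n.toNat) hκ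
  refine ⟨((k₀ : ℤ) + 2) * n, ?_, ?_⟩
  · have : (0 : ℤ) ≤ (k₀ : ℤ) := Int.natCast_nonneg k₀
    nlinarith
  intro J hJ r hpos hlip hflare
  constructor
  · intro j₀ h0 _ hmono i hi hmin
    exact left_bound κ hκ L hL n hn k₀ hk₀ J hJ r hpos hlip hflare j₀ h0 hmono i hi hmin
  · intro j₀ h0 h1 hmono i hi hmin
    -- reflect
    set J' : Set ℤ := {j | -j ∈ J} with hJ'def
    set r' : ℤ → ℝ := fun j => r (-j) with hr'def
    have hJ' : J'.OrdConnected := by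
      constructor
      intro a ha b hb x hx
      exact hJ.out hb ha ⟨neg_le_neg hx.2, neg_le_neg hx.1⟩
    have hpos' : ∀ j ∈ J', 0 < r' j := fun j hj => hpos (-j) hj
    have hlip' : ∀ j ∈ J', ∀ k ∈ J', |j - k| = 1 → r' j ≤ L * r' k := by
      intro j hj k hk habs
      exact hlip (-j) hj (-k) hk (by rw [show -j - -k = -(j - k) by ring, abs_neg]; exact habs)
    have hflare' : ∀ j : ℤ, j - n ∈ J' → j ∈ J' → j + n ∈ J' → 0 < r' j →
        κ * r' j ≤ max (r' (j - n)) (r' (j + n)) := by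
      intro j hm1 hm2 hm3 hp
      have h1' : -j - n ∈ J := by
        have : -(j + n) ∈ J := hm3
        rwa [show -(j + n) = -j - n by ring] at this
      have h3' : -j + n ∈ J := by
        have : -(j - n) ∈ J := hm1
        rwa [show -(j - n) = -j + n by ring] at this
      have := hflare (-j) (by rwa [show -j - n = -j - n from rfl]) hm2
        (by rwa [show -j + n = -j + n from rfl]) hp
      rw [max_comm] at this
      calc κ * r' j = κ * r (-j) := rfl
        _ ≤ max (r (-j + n)) (r (-j - n)) := this
        _ = max (r' (j - n)) (r' (j + n)) := by
            rw [hr'def]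
            congr 1 <;> [skip; skip] <;> congr 1 <;> ring
    have h0' : -j₀ ∈ J' := by simp [hJ'def, h0]
    have hmono' : r' (-j₀) ≤ r' (-j₀ + n) := by
      have : r (-(-j₀)) = r j₀ := by rw [neg_neg]
      simp only [hr'def]
      rw [show -(-j₀ + n) = j₀ - n by ring, neg_neg]
      exact hmono
    have hi' : -i ∈ J' := by simp [hJ'def, hi]
    have hmin' : ∀ j ∈ J', r' (-i) ≤ r' j := by
      intro j hj
      simp only [hr'def, neg_neg]
      exact hmin (-j) hj
    have := left_bound κ hκ L hL n hn k₀ hk₀ J' hJ' r' hpos' hlip' hflare'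
      (-j₀) h0' hmono' (-i) hi' hmin'
    omega
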